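/- Let R be the column-stochastic transition matrix of a time-homogeneous discrete-time Markov chain with stationary distribution π, spectral gap g = −ln|λ₂|, and per-step entropy production σ and dynamical activity γ. Then for every integer K ≥ 1 and all observables a, b ∈ ℝ^N, the asymmetry of the K-step cross-correlation obeys |δC_{ba}^{K}| ≤ K e^{−(K−1)g} ‖a‖_* ‖b‖_* · σ / Φ(σ/(2γ)). (If σ = 0 both sides vanish.) -/

import Mathlib

/-!
The asymmetry telescopes: `R^K Π - Π (Rᵀ)^K = ∑_{j<K} R^j J (Rᵀ)^(K-1-j)` for the probability
current `J = R Π - Π Rᵀ`, so `δC` is a sum of `K` terms `⟨b R^j, J (a R^(K-1-j))⟩`. As `J` has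
vanishing row and column sums, each term only sees the deviations of `b R^j` and `a R^(K-1-j)`
from constants, which the spectral decomposition bounds by `e^(-j g) ‖b‖_*` and
`e^(-(K-1-j) g) ‖a‖_*`. Hence `|δC| ≤ K e^(-(K-1) g) ‖a‖_* ‖b‖_* ∑ |J_mn|`.

For the total current, let `P` and `Q` be the forward and backward fluxes summed over the pairs
with `J_mn > 0`: then `∑ |J_mn| = 2 (P - Q)`, `P + Q ≤ γ`, and `(P - Q) log (P / Q) ≤ σ` by the
log-sum inequality. With `u = Φ (σ / 2γ)`, either `P - Q ≤ γ tanh u` and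
`2 (P - Q) u ≤ 2 γ u tanh u = σ`, or `tanh u < (P - Q) / (P + Q) = tanh (log (P / Q) / 2)` and
`2 (P - Q) u ≤ (P - Q) log (P / Q) ≤ σ`.
-/

open Matrix Finset

open Real (log tanh)

theorem sum_mul_log_div_sum_le {ι : Type*} (s : Finset ι) (p q : ι → ℝ)
    (hp : ∀ i ∈ s, 0 ≤ p i) (hq : ∀ i ∈ s, 0 < q i) :
    (∑ i ∈ s, p i) * log ((∑ i ∈ s, p i) / ∑ i ∈ s, q i) ≤ ∑ i ∈ s, p i * log (p i / q i) := by
  rcases s.eq_empty_or_nonempty with rfl | hs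
  · simp
  have hQ : 0 < ∑ i ∈ s, q i := sum_pos hq hs
  have jensen := Real.convexOn_mul_log.map_centerMass_le (t := s) (p := fun i => p i / q i)
    (fun i hi => (hq i hi).le) hQ (fun i hi => Set.mem_Ici.2 (div_nonneg (hp i hi) (hq i hi).le))
  have hcancel : ∀ i ∈ s, q i * (p i / q i) = p i := fun i hi => mul_div_cancel₀ _ (hq i hi).ne'
  simp only [centerMass, Function.comp_def, smul_eq_mul, ← mul_assoc,
    sum_congr rfl hcancel] at jensen
  rw [inv_mul_eq_div, inv_mul_eq_div,
    ← mul_div_right_comm, div_le_div_iff_of_pos_right hQ] at jensen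
  calc _ ≤ _ := jensen
    _ = _ := sum_congr rfl fun i hi => by rw [hcancel i hi]

theorem two_mul_lt_log_div_of_mul_tanh_lt {P Q u : ℝ} (hQ : 0 < Q) (hQP : Q < P)
    (h : (P + Q) * tanh u < P - Q) : 2 * u < log (P / Q) := by
  have hPQ : 0 < P + Q := by linarith
  have hx : tanh u < (P - Q) / (P + Q) := by rwa [lt_div_iff₀ (by linarith), mul_comm]
  have hx1 : (P - Q) / (P + Q) < 1 := by rw [div_lt_one hPQ]; linarith
  have := Real.artanh_lt_artanh (Real.neg_one_lt_tanh u) hx1 hx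
  rw [Real.artanh_tanh,
    Real.artanh_eq_half_log ⟨by linarith [Real.neg_one_lt_tanh u], hx1.le⟩] at this
  have hratio : (1 + (P - Q) / (P + Q)) / (1 - (P - Q) / (P + Q)) = P / Q := by
    rw [div_eq_div_iff (by rw [sub_ne_zero]; exact hx1.ne') hQ.ne']
    field_simp
    ring
  rw [hratio] at this
  linarith

theorem two_mul_sub_mul_le_of_mul_tanh_eq {P Q γ σ u : ℝ} (hQ : 0 < Q) (hQP : Q < P)
    (hγ : P + Q ≤ γ) (hσ : (P - Q) * log (P / Q) ≤ σ) (hu : 0 ≤ u)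
    (hs : u * tanh u = σ / (2 * γ)) : 2 * (P - Q) * u ≤ σ := by
  have hγpos : 0 < γ := by linarith
  have htanh : 0 ≤ tanh u := by
    rw [Real.tanh_eq_sinh_div_cosh]
    exact div_nonneg (Real.sinh_nonneg_iff.2 hu) (Real.cosh_pos u).le
  rcases le_or_gt (P - Q) (γ * tanh u) with h | h
  · calc 2 * (P - Q) * u ≤ 2 * (γ * tanh u) * u := by gcongr
      _ = 2 * γ * (u * tanh u) := by ring
      _ = σ := by rw [hs]; field_simp
  · have hlog := two_mul_lt_log_div_of_mul_tanh_lt hQ hQP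
      ((mul_le_mul_of_nonneg_right hγ htanh).trans_lt h)
    calc 2 * (P - Q) * u = (P - Q) * (2 * u) := by ring
      _ ≤ (P - Q) * log (P / Q) := by gcongr
      _ ≤ σ := hσ

noncomputable section Flux

variable {ι : Type*} [Fintype ι] (p : ι → ι → ℝ)

def entropyProduction [DecidableEq ι] : ℝ :=
  ∑ m, ∑ n, if m ≠ n then p m n * log (p m n / p n m) else 0

def activity [DecidableEq ι] : ℝ :=
  ∑ m, ∑ n, if m ≠ n then p m n else 0

def forwardPairs : Finset (ι × ι) :=
  univ.filter fun e => p e.2 e.1 < p e.1 e.2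

theorem lt_of_mem_forwardPairs {e : ι × ι} (he : e ∈ forwardPairs p) : p e.2 e.1 < p e.1 e.2 :=
  (mem_filter.1 he).2

theorem sum_sum_eq_sum_forwardPairs (φ : ι → ι → ℝ) (hφ : ∀ m n, p m n = p n m → φ m n = 0) :
    ∑ m, ∑ n, φ m n = ∑ e ∈ forwardPairs p, (φ e.1 e.2 + φ e.2 e.1) := by
  have hsplit : ∀ m n, φ m n =
      (if p n m < p m n then φ m n else 0) + if p m n < p n m then φ m n else 0 := by
    intro m n
    rcases lt_trichotomy (p n m) (p m n) with h | h | h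
    · simp [h, h.not_gt]
    · simp [hφ m n h.symm]
    · simp [h, h.not_gt]
  rw [sum_congr rfl fun m _ => sum_congr rfl fun n _ => hsplit m n]
  simp only [sum_add_distrib]
  rw [sum_comm (f := fun m n => if p m n < p n m then φ m n else 0), ← sum_add_distrib]
  simp only [← sum_add_distrib, ← ite_add_zero]
  rw [forwardPairs, sum_filter, ← Fintype.sum_prod_type']

theorem sum_abs_sub_eq_two_mul_sum_forwardPairs :
    ∑ m, ∑ n, |p m n - p n m| = 2 * ∑ e ∈ forwardPairs p, (p e.1 e.2 - p e.2 e.1) := by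
  rw [sum_sum_eq_sum_forwardPairs p _ fun m n h => by simp [h], mul_sum]
  refine sum_congr rfl fun e he => ?_
  have hlt := lt_of_mem_forwardPairs p he
  rw [abs_of_pos (sub_pos.2 hlt), abs_of_neg (sub_neg.2 hlt)]
  ring

theorem ne_of_mem_forwardPairs {e : ι × ι} (he : e ∈ forwardPairs p) : e.1 ≠ e.2 :=
  fun h => (lt_of_mem_forwardPairs p he).ne (by rw [h])

variable [DecidableEq ι]

theorem entropyProduction_eq_sum_forwardPairs :
    entropyProduction p = ∑ e ∈ forwardPairs p,
      (p e.1 e.2 * log (p e.1 e.2 / p e.2 e.1) + p e.2 e.1 * log (p e.2 e.1 / p e.1 e.2)) := by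
  rw [entropyProduction, sum_sum_eq_sum_forwardPairs p _ fun m n h => by simp [h]]
  refine sum_congr rfl fun e he => ?_
  have hne := ne_of_mem_forwardPairs p he
  rw [if_pos hne, if_pos hne.symm]

theorem sum_forwardPairs_add_le_activity (hp : ∀ m n, 0 ≤ p m n) :
    ∑ e ∈ forwardPairs p, (p e.1 e.2 + p e.2 e.1) ≤ activity p := by
  calc ∑ e ∈ forwardPairs p, (p e.1 e.2 + p e.2 e.1)
      = ∑ m, ∑ n, if p m n = p n m then 0 else p m n := by
        rw [sum_sum_eq_sum_forwardPairs p _ fun m n h => if_pos h]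
        refine sum_congr rfl fun e he => ?_
        have hlt := lt_of_mem_forwardPairs p he
        rw [if_neg hlt.ne', if_neg hlt.ne]
    _ ≤ activity p := by
        refine sum_le_sum fun m _ => sum_le_sum fun n _ => ?_
        rcases eq_or_ne m n with rfl | h
        · simp
        · rw [if_pos h]; split_ifs <;> simp [hp]

theorem sum_abs_sub_le_entropyProduction_div (hp : ∀ m n, 0 ≤ p m n)
    (hsign : ∀ m n, m ≠ n → (0 < p m n ↔ 0 < p n m))
    (Φ : ℝ → ℝ) (hΦ_nonneg : ∀ u, 0 ≤ u → 0 ≤ Φ u) (hΦ : ∀ u, 0 ≤ u → Φ u * tanh (Φ u) = u) :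
    ∑ m, ∑ n, |p m n - p n m| ≤
      entropyProduction p / Φ (entropyProduction p / (2 * activity p)) := by
  rw [sum_abs_sub_eq_two_mul_sum_forwardPairs, sum_sub_distrib]
  rcases (forwardPairs p).eq_empty_or_nonempty with hE | hE
  · simp [hE, entropyProduction_eq_sum_forwardPairs]
  have hmem : ∀ e ∈ forwardPairs p, 0 < p e.2 e.1 ∧ p e.2 e.1 < p e.1 e.2 := fun e he =>
    have hlt := lt_of_mem_forwardPairs p he
    ⟨(hsign _ _ (ne_of_mem_forwardPairs p he)).1 ((hp _ _).trans_lt hlt), hlt⟩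
  set P := ∑ e ∈ forwardPairs p, p e.1 e.2
  set Q := ∑ e ∈ forwardPairs p, p e.2 e.1
  have hQ : 0 < Q := sum_pos (fun e he => (hmem e he).1) hE
  have hQP : Q < P := sum_lt_sum_of_nonempty hE fun e he => (hmem e he).2
  have hγ : P + Q ≤ activity p :=
    sum_add_distrib.symm.trans_le (sum_forwardPairs_add_le_activity p hp)
  have hσ : (P - Q) * log (P / Q) ≤ entropyProduction p := by
    have hfwd := sum_mul_log_div_sum_le _ (fun e => p e.1 e.2) (fun e => p e.2 e.1)
      (fun _ _ => hp _ _) (fun e he => (hmem e he).1)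
    have hbwd := sum_mul_log_div_sum_le _ (fun e => p e.2 e.1) (fun e => p e.1 e.2)
      (fun _ _ => hp _ _) (fun e he => (hmem e he).1.trans (hmem e he).2)
    rw [← inv_div, Real.log_inv] at hbwd
    rw [entropyProduction_eq_sum_forwardPairs, sum_add_distrib]
    linarith
  have hσpos : 0 < entropyProduction p :=
    (mul_pos (sub_pos.2 hQP) (Real.log_pos ((one_lt_div hQ).2 hQP))).trans_le hσ
  have harg : 0 < entropyProduction p / (2 * activity p) := by
    have : 0 < activity p := by linarith
    positivity
  have hu : 0 < Φ (entropyProduction p / (2 * activity p)) := by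
    refine (hΦ_nonneg _ harg.le).lt_of_ne' fun h0 => harg.ne ?_
    rw [← hΦ _ harg.le, h0, zero_mul]
  rw [le_div_iff₀ hu]
  exact two_mul_sub_mul_le_of_mul_tanh_eq hQ hQP hγ hσ (hΦ_nonneg _ harg.le) (hΦ _ harg.le)

end Flux

theorem pow_mul_sub_mul_pow_eq_sum {α : Type*} [Ring α] (r s x : α) (K : ℕ) :
    r ^ K * x - x * s ^ K = ∑ j ∈ range K, r ^ j * (r * x - x * s) * s ^ (K - 1 - j) := by
  induction K with
  | zero => simp
  | succ K ih =>
    have hshift : ∑ j ∈ range K, r ^ (j + 1) * (r * x - x * s) * s ^ (K + 1 - 1 - (j + 1)) =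
        r * (r ^ K * x - x * s ^ K) := by
      rw [ih, mul_sum]
      refine sum_congr rfl fun j _ => ?_
      rw [pow_succ', show K + 1 - 1 - (j + 1) = K - 1 - j by omega, mul_assoc, mul_assoc,
        mul_assoc]
    rw [sum_range_succ', hshift, Nat.add_sub_cancel, Nat.sub_zero, pow_succ', pow_succ' s]
    noncomm_ring

section Correlation

variable {ι : Type*} [Fintype ι]

theorem dotProduct_mulVec_sub_dotProduct_mulVec_eq_sum [DecidableEq ι] {α : Type*} [CommRing α]
    (R P : Matrix ι ι α) (hP : Pᵀ = P) (a b : ι → α) (K : ℕ) :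
    b ⬝ᵥ (R ^ K * P) *ᵥ a - a ⬝ᵥ (R ^ K * P) *ᵥ b =
      ∑ j ∈ range K, (b ᵥ* R ^ j) ⬝ᵥ (R * P - P * Rᵀ) *ᵥ (a ᵥ* R ^ (K - 1 - j)) := by
  have hswap : a ⬝ᵥ (R ^ K * P) *ᵥ b = b ⬝ᵥ (P * Rᵀ ^ K) *ᵥ a := by
    rw [dotProduct_comm, dotProduct_mulVec, ← mulVec_transpose, transpose_mul, hP, transpose_pow,
      transpose_transpose]
  rw [hswap, ← dotProduct_sub, ← sub_mulVec, pow_mul_sub_mul_pow_eq_sum, sum_mulVec, dotProduct_sum]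
  refine sum_congr rfl fun j _ => ?_
  rw [← mulVec_mulVec, ← mulVec_mulVec, dotProduct_mulVec, ← transpose_pow, mulVec_transpose]

theorem abs_dotProduct_mulVec_le {κ : Type*} [Fintype κ] (A : Matrix ι κ ℝ) {x : ι → ℝ}
    {y : κ → ℝ} {X Y : ℝ} (hx : ∀ i, |x i| ≤ X) (hy : ∀ k, |y k| ≤ Y) :
    |x ⬝ᵥ A *ᵥ y| ≤ X * Y * ∑ i, ∑ k, |A i k| := by
  simp only [dotProduct, mulVec, mul_sum]
  calc |∑ i, ∑ k, x i * (A i k * y k)| ≤ ∑ i, ∑ k, |x i * (A i k * y k)| :=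
        (abs_sum_le_sum_abs _ _).trans (sum_le_sum fun i _ => abs_sum_le_sum_abs _ _)
    _ ≤ ∑ i, ∑ k, X * Y * |A i k| := by
        refine sum_le_sum fun i _ => sum_le_sum fun k _ => ?_
        rw [abs_mul, abs_mul]
        have hX : 0 ≤ X := (abs_nonneg _).trans (hx i)
        calc |x i| * (|A i k| * |y k|) ≤ X * (|A i k| * Y) := by gcongr; exacts [hx i, hy k]
          _ = X * Y * |A i k| := by ring

theorem dotProduct_mulVec_eq_of_mulVec_one_eq_zero {κ : Type*} [Fintype κ] {α : Type*}
    [CommRing α] {A : Matrix ι κ α} (hrow : A *ᵥ 1 = 0) (hcol : 1 ᵥ* A = 0)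
    (x : ι → α) (y : κ → α) (c d : α) :
    (x - fun _ => c) ⬝ᵥ A *ᵥ (y - fun _ => d) = x ⬝ᵥ A *ᵥ y := by
  have hc : (fun _ => c : ι → α) = c • 1 := by ext; simp
  have hd : (fun _ => d : κ → α) = d • 1 := by ext; simp
  rw [hc, hd, mulVec_sub, mulVec_smul, hrow, smul_zero, sub_zero, sub_dotProduct, smul_dotProduct,
    dotProduct_mulVec 1, hcol, zero_dotProduct, smul_zero, sub_zero]

theorem abs_dotProduct_mulVec_le_of_abs_sub_le {κ : Type*} [Fintype κ] {A : Matrix ι κ ℝ}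
    (hrow : A *ᵥ 1 = 0) (hcol : 1 ᵥ* A = 0) {x : ι → ℝ} {y : κ → ℝ} {c d X Y : ℝ}
    (hx : ∀ i, |x i - c| ≤ X) (hy : ∀ k, |y k - d| ≤ Y) :
    |x ⬝ᵥ A *ᵥ y| ≤ X * Y * ∑ i, ∑ k, |A i k| := by
  rw [← dotProduct_mulVec_eq_of_mulVec_one_eq_zero hrow hcol x y c d]
  exact abs_dotProduct_mulVec_le A hx hy

theorem abs_dotProduct_mulVec_sub_le [DecidableEq ι] (R P : Matrix ι ι ℝ) (hP : Pᵀ = P)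
    (hrow : (R * P - P * Rᵀ) *ᵥ 1 = 0) (hcol : 1 ᵥ* (R * P - P * Rᵀ) = 0)
    {a b : ι → ℝ} {r A B : ℝ} (ha : ∀ j, ∃ c, ∀ i, |(a ᵥ* R ^ j) i - c| ≤ r ^ j * A)
    (hb : ∀ j, ∃ c, ∀ i, |(b ᵥ* R ^ j) i - c| ≤ r ^ j * B) (K : ℕ) :
    |b ⬝ᵥ (R ^ K * P) *ᵥ a - a ⬝ᵥ (R ^ K * P) *ᵥ b| ≤
      K * r ^ (K - 1) * A * B * ∑ m, ∑ n, |(R * P - P * Rᵀ) m n| := by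
  set S := ∑ m, ∑ n, |(R * P - P * Rᵀ) m n|
  rw [dotProduct_mulVec_sub_dotProduct_mulVec_eq_sum R P hP]
  refine (abs_sum_le_sum_abs _ _).trans ?_
  calc _ ≤ ∑ _j ∈ range K, r ^ (K - 1) * A * B * S := by
        refine sum_le_sum fun j hj => ?_
        obtain ⟨cb, hcb⟩ := hb j
        obtain ⟨ca, hca⟩ := ha (K - 1 - j)
        have hexp : j + (K - 1 - j) = K - 1 := by have := mem_range.1 hj; omega
        calc _ ≤ r ^ j * B * (r ^ (K - 1 - j) * A) * S :=
              abs_dotProduct_mulVec_le_of_abs_sub_le hrow hcol hcb hca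
          _ = r ^ (j + (K - 1 - j)) * A * B * S := by rw [pow_add]; ring
          _ = _ := by rw [hexp]
    _ = _ := by rw [sum_const, card_range, nsmul_eq_mul]; ring

end Correlation

section Stationary

variable {ι : Type*} [Fintype ι] [DecidableEq ι] (R : Matrix ι ι ℝ) (π : ι → ℝ)

def probabilityCurrent : Matrix ι ι ℝ :=
  R * diagonal π - diagonal π * Rᵀ

theorem probabilityCurrent_apply (m n : ι) :
    probabilityCurrent R π m n = R m n * π n - R n m * π m := by
  simp [probabilityCurrent, mul_diagonal, diagonal_mul, mul_comm]

variable {R π}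

theorem probabilityCurrent_mulVec_one (hR : ∀ n, ∑ m, R m n = 1) (hπ : R *ᵥ π = π) :
    probabilityCurrent R π *ᵥ 1 = 0 := by
  have h1 : 1 ᵥ* R = 1 := funext fun n => by simp [vecMul, dotProduct, hR]
  have hd : diagonal π *ᵥ 1 = π := by ext; simp [mulVec_diagonal]
  simp [probabilityCurrent, sub_mulVec, ← mulVec_mulVec, mulVec_transpose, h1, hd, hπ]

theorem one_vecMul_probabilityCurrent (hR : ∀ n, ∑ m, R m n = 1) (hπ : R *ᵥ π = π) :
    1 ᵥ* probabilityCurrent R π = 0 := by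
  have h1 : 1 ᵥ* R = 1 := funext fun n => by simp [vecMul, dotProduct, hR]
  have hd : 1 ᵥ* diagonal π = π := by ext; simp [vecMul_diagonal]
  simp [probabilityCurrent, vecMul_sub, ← vecMul_vecMul, vecMul_transpose, h1, hd, hπ]

end Stationary

theorem vecMul_pow_eq_pow_smul {ι α : Type*} [Fintype ι] [DecidableEq ι] [CommSemiring α]
    {M : Matrix ι ι α} {w : ι → α} {l : α} (h : w ᵥ* M = l • w) (j : ℕ) :
    w ᵥ* M ^ j = l ^ j • w := by
  induction j with
  | zero => simp
  | succ j ih => rw [pow_succ, ← vecMul_vecMul, ih, smul_vecMul, h, pow_succ, smul_smul]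

section Spectral

variable {ι κ : Type*} [Fintype ι] [DecidableEq ι] [Fintype κ] (R : Matrix ι ι ℝ)
  (lam : κ → ℂ) (v : κ → ι → ℂ)

theorem ofReal_vecMul_pow_eq_sum
    (heig : ∀ n, star (v n) ᵥ* R.map Complex.ofReal = lam n • star (v n))
    {x : ι → ℝ} {tx : κ → ℂ} (hx : (fun i => (x i : ℂ)) = ∑ n, tx n • v n) (j : ℕ) (i : ι) :
    ((x ᵥ* R ^ j) i : ℂ) = ∑ n, star (tx n) * lam n ^ j * star (v n i) := by
  have hxstar : (fun i => (x i : ℂ)) = ∑ n, star (tx n) • star (v n) := by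
    have h := congrArg star hx
    rw [star_sum] at h
    simp only [star_smul] at h
    rw [← h]
    funext i
    simp
  rw [← Complex.ofRealHom_eq_coe, RingHom.map_vecMul, Matrix.map_pow]
  change ((fun i => (x i : ℂ)) ᵥ* R.map Complex.ofReal ^ j) i = _
  rw [hxstar, sum_vecMul, Finset.sum_apply]
  refine sum_congr rfl fun n _ => ?_
  rw [smul_vecMul, vecMul_pow_eq_pow_smul (heig n)]
  simp [mul_assoc]

theorem exists_abs_vecMul_pow_sub_le [DecidableEq κ]
    (heig : ∀ n, star (v n) ᵥ* R.map Complex.ofReal = lam n • star (v n))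
    {n₀ : κ} (hv₀ : ∃ c, v n₀ = fun _ => c) {r : ℝ} (hgap : ∀ n, n ≠ n₀ → ‖lam n‖ ≤ r)
    (hv : ∀ n i, ‖v n i‖ ≤ 1)
    {x : ι → ℝ} {tx : κ → ℂ} (hx : (fun i => (x i : ℂ)) = ∑ n, tx n • v n) (j : ℕ) :
    ∃ c : ℝ, ∀ i, |(x ᵥ* R ^ j) i - c| ≤ r ^ j * ∑ n ∈ univ.erase n₀, ‖tx n‖ := by
  obtain ⟨c₀, hc₀⟩ := hv₀
  set c := star (tx n₀) * lam n₀ ^ j * star c₀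
  refine ⟨c.re, fun i => ?_⟩
  have hsplit : ((x ᵥ* R ^ j) i : ℂ) - c =
      ∑ n ∈ univ.erase n₀, star (tx n) * lam n ^ j * star (v n i) := by
    rw [ofReal_vecMul_pow_eq_sum R lam v heig hx, ← add_sum_erase _ _ (mem_univ n₀), hc₀,
      add_sub_cancel_left]
  calc |(x ᵥ* R ^ j) i - c.re| = |(((x ᵥ* R ^ j) i : ℂ) - c).re| := by simp
    _ ≤ ‖∑ n ∈ univ.erase n₀, star (tx n) * lam n ^ j * star (v n i)‖ :=
        hsplit ▸ Complex.abs_re_le_norm _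
    _ ≤ ∑ n ∈ univ.erase n₀, r ^ j * ‖tx n‖ := by
        refine (norm_sum_le _ _).trans (sum_le_sum fun n hn => ?_)
        rw [norm_mul, norm_mul, norm_star, norm_star, norm_pow, mul_comm (r ^ j)]
        have hlam := hgap n (ne_of_mem_erase hn)
        have hr : 0 ≤ r := (norm_nonneg _).trans hlam
        calc ‖tx n‖ * ‖lam n‖ ^ j * ‖v n i‖ ≤ ‖tx n‖ * r ^ j * 1 := by gcongr; exact hv n i
          _ = ‖tx n‖ * r ^ j := mul_one _
    _ = r ^ j * ∑ n ∈ univ.erase n₀, ‖tx n‖ := (mul_sum ..).symm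

end Spectral

theorem norm_le_one_of_sum_normSq_eq_one {ι : Type*} [Fintype ι] {w : ι → ℂ}
    (h : ∑ i, Complex.normSq (w i) = 1) (i : ι) : ‖w i‖ ≤ 1 := by
  have hi : Complex.normSq (w i) ≤ 1 :=
    h ▸ single_le_sum (fun k _ => Complex.normSq_nonneg (w k)) (mem_univ i)
  rw [Complex.normSq_eq_norm_sq] at hi
  exact (sq_le_one_iff₀ (norm_nonneg _)).1 hi

theorem discrete_time_asymmetry_bound_general
    (N : ℕ) (R : Matrix (Fin N) (Fin N) ℝ)
    (hR_nonneg : ∀ m n : Fin N, 0 ≤ R m n)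
    (hR_stoch : ∀ n : Fin N, ∑ m, R m n = 1)
    (hR_sign : ∀ m n : Fin N, m ≠ n → (0 < R m n ↔ 0 < R n m))
    (π : Fin N → ℝ) (hπ_pos : ∀ n, 0 < π n)
    (hstat : R.mulVec π = π)
    -- spectral decomposition of `R` by left eigenvectors
    (g : ℝ)
    (lam : Fin N → ℂ) (v : Fin N → Fin N → ℂ) (n₀ : Fin N)
    (hv₀ : ∃ c : ℂ, v n₀ = fun _ => c)
    (hgap : ∀ n, n ≠ n₀ → ‖lam n‖ ≤ Real.exp (-g))
    (heig : ∀ n, Matrix.vecMul (star (v n)) (R.map (Complex.ofReal)) = lam n • star (v n))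
    (hnorm : ∀ n, ∑ i, Complex.normSq (v n i) = 1)
    -- `Φ` is the inverse on `[0,∞)` of `u ↦ u · tanh u`
    (Φ : ℝ → ℝ) (hΦ_nonneg : ∀ u, 0 ≤ u → 0 ≤ Φ u)
    (hΦ : ∀ u, 0 ≤ u → Φ u * Real.tanh (Φ u) = u)
    -- per-step entropy production and dynamical activity
    (σ γ : ℝ)
    (hσ : σ = ∑ m, ∑ n, if m ≠ n then
        R m n * π n * Real.log ((R m n * π n) / (R n m * π m)) else 0)
    (hγ : γ = ∑ m, ∑ n, if m ≠ n then R m n * π n else 0)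
    -- observables and their expansions in the left-eigenvector basis
    (a b : Fin N → ℝ) (ta tb : Fin N → ℂ)
    (hta : (fun i => (a i : ℂ)) = ∑ n, ta n • v n)
    (htb : (fun i => (b i : ℂ)) = ∑ n, tb n • v n)
    (K : ℕ) :
    |b ⬝ᵥ (R ^ K * Matrix.diagonal π).mulVec a -
        a ⬝ᵥ (R ^ K * Matrix.diagonal π).mulVec b| ≤
      (K : ℝ) * Real.exp (-(((K : ℝ) - 1) * g)) *
        (∑ n ∈ Finset.univ.erase n₀, ‖ta n‖) *
        (∑ n ∈ Finset.univ.erase n₀, ‖tb n‖) *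
        (σ / Φ (σ / (2 * γ))) := by
  have hv : ∀ n i, ‖v n i‖ ≤ 1 := fun n => norm_le_one_of_sum_normSq_eq_one (hnorm n)
  have hasymm := abs_dotProduct_mulVec_sub_le R (diagonal π) (diagonal_transpose π)
    (probabilityCurrent_mulVec_one hR_stoch hstat) (one_vecMul_probabilityCurrent hR_stoch hstat)
    (exists_abs_vecMul_pow_sub_le R lam v heig hv₀ hgap hv hta)
    (exists_abs_vecMul_pow_sub_le R lam v heig hv₀ hgap hv htb) K
  have hcurrent : ∑ m, ∑ n, |probabilityCurrent R π m n| ≤ σ / Φ (σ / (2 * γ)) := by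
    simp only [probabilityCurrent_apply]
    subst hσ hγ
    refine sum_abs_sub_le_entropyProduction_div (fun m n => R m n * π n)
      (fun m n => mul_nonneg (hR_nonneg m n) (hπ_pos n).le) (fun m n hmn => ?_) Φ hΦ_nonneg hΦ
    rw [mul_pos_iff_of_pos_right (hπ_pos n), mul_pos_iff_of_pos_right (hπ_pos m)]
    exact hR_sign m n hmn
  -- `K - 1` truncates at `K = 0`, where the factor `K` kills both sides.
  have hrate : (K : ℝ) * Real.exp (-g) ^ (K - 1) = K * Real.exp (-(((K : ℝ) - 1) * g)) := by
    rcases K.eq_zero_or_pos with rfl | hK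
    · simp
    · rw [← Real.exp_nat_mul, Nat.cast_pred hK]; ring_nf
  rw [hrate] at hasymm
  exact hasymm.trans (by gcongr; exact hcurrent)

/-- **Discrete-time generalization:** for a time-homogeneous Markov chain with stochastic
matrix `R`, stationary distribution `π`, spectral gap `g = −ln|λ₂|`, per-step entropy
production `σ` and dynamical activity `γ`, the asymmetry of `K`-step cross-correlations
obeys `|δC_{ba}^K| ≤ K e^{−(K−1)g} ‖a‖_* ‖b‖_* · σ / Φ(σ/(2γ))`.
(With Lean's convention `0 / 0 = 0`, the case `σ = 0` is included.) -/
theorem discrete_time_asymmetry_bound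
    (N : ℕ) (R : Matrix (Fin N) (Fin N) ℝ)
    (hR_nonneg : ∀ m n : Fin N, 0 ≤ R m n)
    (hR_stoch : ∀ n : Fin N, ∑ m, R m n = 1)
    (hR_sign : ∀ m n : Fin N, m ≠ n → (0 < R m n ↔ 0 < R n m))
    (π : Fin N → ℝ) (hπ_pos : ∀ n, 0 < π n) (hπ_sum : ∑ n, π n = 1)
    (hstat : R.mulVec π = π)
    -- spectral decomposition of `R` by left eigenvectors
    (g : ℝ) (hg : 0 < g)
    (lam : Fin N → ℂ) (v : Fin N → Fin N → ℂ) (n₀ : Fin N)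
    (hlam₀ : lam n₀ = 1)
    (hv₀ : ∃ c : ℂ, v n₀ = fun _ => c)
    (hgap : ∀ n, n ≠ n₀ → ‖lam n‖ ≤ Real.exp (-g))
    (heig : ∀ n, Matrix.vecMul (star (v n)) (R.map (Complex.ofReal)) = lam n • star (v n))
    (hnorm : ∀ n, ∑ i, Complex.normSq (v n i) = 1)
    (hbasis : LinearIndependent ℂ v)
    -- `Φ` is the inverse on `[0,∞)` of `u ↦ u · tanh u`
    (Φ : ℝ → ℝ) (hΦ_nonneg : ∀ u, 0 ≤ u → 0 ≤ Φ u)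
    (hΦ : ∀ u, 0 ≤ u → Φ u * Real.tanh (Φ u) = u)
    -- per-step entropy production and dynamical activity
    (σ γ : ℝ)
    (hσ : σ = ∑ m, ∑ n, if m ≠ n then
        R m n * π n * Real.log ((R m n * π n) / (R n m * π m)) else 0)
    (hγ : γ = ∑ m, ∑ n, if m ≠ n then R m n * π n else 0)
    -- observables and their expansions in the left-eigenvector basis
    (a b : Fin N → ℝ) (ta tb : Fin N → ℂ)
    (hta : (fun i => (a i : ℂ)) = ∑ n, ta n • v n)
    (htb : (fun i => (b i : ℂ)) = ∑ n, tb n • v n)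
    (K : ℕ) (hK : 1 ≤ K) :
    |b ⬝ᵥ (R ^ K * Matrix.diagonal π).mulVec a -
        a ⬝ᵥ (R ^ K * Matrix.diagonal π).mulVec b| ≤
      (K : ℝ) * Real.exp (-(((K : ℝ) - 1) * g)) *
        (∑ n ∈ Finset.univ.erase n₀, ‖ta n‖) *
        (∑ n ∈ Finset.univ.erase n₀, ‖tb n‖) *
        (σ / Φ (σ / (2 * γ))) :=
  discrete_time_asymmetry_bound_general N R hR_nonneg hR_stoch hR_sign π hπ_pos hstat g lam v n₀ hv₀
    hgap heig hnorm Φ hΦ_nonneg hΦ σ γ hσ hγ a b ta tb hta htb K
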